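/- In the tower graph G_κ with strict majority thresholds, the sequence S_0=L_κ∪L'_{κ−1} (where L'_{κ−1}⊆L_{κ−1} has ⌈κ/2⌉ nodes), S_{κ−2}={node of L_1, one of its leaf neighbors}, and S_i=∅ otherwise, is a disjoint timed target set of size κ+⌈κ/2⌉+2; consequently the minimum disjoint timed target set size of G_κ is O(√n). -/

import Mathlib

open Finset
open scoped Classical

variable {V : Type*}

noncomputable def Qseq (G : SimpleGraph V) [Fintype V] (τ : V → ℕ) (S : ℕ → Finset V) :
    ℕ → Finset V
  | 0 => ∅
  | i + 1 => Finset.univ.filter fun v =>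
      τ v ≤ (G.neighborFinset v ∩ (S i ∪ Qseq G τ S i)).card

def IsTTS (G : SimpleGraph V) [Fintype V] (τ : V → ℕ) (S : ℕ → Finset V) (k : ℕ) : Prop :=
  S k = ∅ ∧ Qseq G τ S k = Finset.univ

def ttsSize (S : ℕ → Finset V) (k : ℕ) : ℕ := ∑ i ∈ Finset.range (k + 1), (S i).card

noncomputable def strictMaj (G : SimpleGraph V) [Fintype V] (v : V) : ℕ := (G.degree v + 2) / 2

noncomputable def npStep (G : SimpleGraph V) [Fintype V] (τ : V → ℕ) (A : Finset V) : Finset V :=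
  Finset.univ.filter fun v => τ v ≤ (G.neighborFinset v ∩ A).card

def IsTS (G : SimpleGraph V) [Fintype V] (τ : V → ℕ) (S : Finset V) : Prop :=
  ∃ i : ℕ, (npStep G τ)^[i] S = Finset.univ

noncomputable def MTT (G : SimpleGraph V) [Fintype V] (τ : V → ℕ) : ℕ :=
  sInf {m | ∃ (S : ℕ → Finset V) (k : ℕ), IsTTS G τ S k ∧ ttsSize S k = m}

/-- Vertex type of the tower graph: levels `L_1, …, L_κ` with `|L_i| = i`
(a pair `⟨i, j⟩` with `i : Fin κ` encodes the `j`-th node of level `L_{i+1}`),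
plus two extra leaf nodes. -/
def towerV (κ : ℕ) : Type := (Σ i : Fin κ, Fin (i + 1)) ⊕ Fin 2

instance (κ : ℕ) : Fintype (towerV κ) := by unfold towerV; infer_instance

/-- The level of a vertex: level nodes of `L_i` have level `i ∈ {1, …, κ}`, and the two
leaves have level `0`. -/
def lev {κ : ℕ} : towerV κ → ℕ
  | Sum.inl x => (x.1 : ℕ) + 1
  | Sum.inr _ => 0

/-- The tower graph `G_κ`: each node of `L_i` is adjacent to every node of `L_{i+1}`,
and the two leaves (level `0`) are adjacent exactly to the unique node of `L_1`. -/
def towerGraph (κ : ℕ) : SimpleGraph (towerV κ) where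
  Adj a b := lev a + 1 = lev b ∨ lev b + 1 = lev a
  symm := ⟨fun a b h => h.symm⟩
  loopless := ⟨by
    intro a h
    rcases h with h | h <;> omega⟩

/-- The set `L_i` of nodes of level `i` (for `i = 0` this is the pair of leaves). -/
noncomputable def levelSet (κ : ℕ) (i : ℕ) : Finset (towerV κ) :=
  Finset.univ.filter fun v => lev v = i

/-- A disjoint timed target set: a timed target set whose targeted sets
`S_0, …, S_k` are pairwise disjoint. -/
def IsDTTS (G : SimpleGraph V) [Fintype V] (τ : V → ℕ) (S : ℕ → Finset V) (k : ℕ) : Prop :=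
  IsTTS G τ S k ∧
    ∀ i ∈ Finset.range (k + 1), ∀ j ∈ Finset.range (k + 1), i ≠ j → Disjoint (S i) (S j)

/-- Minimum size of a disjoint timed target set. -/
noncomputable def MDTT (G : SimpleGraph V) [Fintype V] (τ : V → ℕ) : ℕ :=
  sInf {m | ∃ (S : ℕ → Finset V) (k : ℕ), IsDTTS G τ S k ∧ ttsSize S k = m}

/-- Minimum size of an ordinary target set in the non-progressive model. -/
noncomputable def MT (G : SimpleGraph V) [Fintype V] (τ : V → ℕ) : ℕ :=
  sInf {m | ∃ S : Finset V, IsTS G τ S ∧ S.card = m}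

/-- The timed sequence used in Theorem 1: `S_0 = L_κ ∪ L'` (where `L' ⊆ L_{κ−1}`),
`S_{κ−2} = {x, y}` (the node of `L_1` and one of its leaf neighbors), and `S_i = ∅`
otherwise. -/
noncomputable def towerSeq (κ : ℕ) (L' : Finset (towerV κ)) (x y : towerV κ) :
    ℕ → Finset (towerV κ) :=
  fun i => if i = 0 then levelSet κ κ ∪ L' else if i = κ - 2 then {x, y} else ∅

/-!
A node of `L_i` with `2 ≤ i < κ` has degree `2i` and threshold `i + 1 = |L_{i+1}|`, so the full
level above it activates it on its own; a node of `L_κ` has threshold `⌈κ/2⌉ ≤ |L_{κ-1}|`.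
Hence `S_0 = L_κ ∪ L'` activates `L_{κ-1} ∪ L_κ` at time `1` (`L'` is exactly large enough for
`L_κ`), and the active region then grows downwards by one level per round while staying active,
covering `L_2, …, L_κ` at time `κ - 2`. The seeds `x ∈ L_1`, `y ∈ L_0` then finish the job: `y`
and `L_2` give the node of `L_1` its threshold `3`, and `x` activates both leaves. Since the
target is `Q_{κ-1} = V`, lower bounds on the active sets suffice throughout. The size is at most
`2κ`, and `n = κ(κ+1)/2 + 2 ≥ κ²/2`.
-/

lemma mem_npStep_of_subset {G : SimpleGraph V} [Fintype V] {τ : V → ℕ} {A B : Finset V} {v : V}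
    (hBN : B ⊆ G.neighborFinset v) (hBA : B ⊆ A) (hτ : τ v ≤ B.card) : v ∈ npStep G τ A :=
  mem_filter.2 ⟨mem_univ v, hτ.trans (card_le_card (subset_inter hBN hBA))⟩

lemma Qseq_succ (G : SimpleGraph V) [Fintype V] (τ : V → ℕ) (S : ℕ → Finset V) (i : ℕ) :
    Qseq G τ S (i + 1) = npStep G τ (S i ∪ Qseq G τ S i) := rfl

namespace Tower

variable {κ : ℕ}

lemma lev_le (v : towerV κ) : lev v ≤ κ := by
  rcases v with ⟨i, _⟩ | _ <;> simp only [lev] <;> omega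

lemma mem_levelSet {i : ℕ} {v : towerV κ} : v ∈ levelSet κ i ↔ lev v = i := by
  simp [levelSet]

lemma card_levelSet (i : ℕ) :
    (levelSet κ i).card = if i = 0 then 2 else if i ≤ κ then i else 0 := by
  rw [levelSet, card_filter]
  change ∑ v : (Σ j : Fin κ, Fin (j + 1)) ⊕ Fin 2, (if lev (κ := κ) v = i then 1 else 0) = _
  rw [Fintype.sum_sum_type, Fintype.sum_sigma]
  rcases i with _ | m
  · simp [lev]
  · simp only [lev, Nat.add_right_cancel_iff, sum_const, card_univ, Fintype.card_fin, smul_eq_mul,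
      mul_ite, mul_one, mul_zero]
    rw [Fin.sum_univ_eq_sum_range (fun j => if j = m then j + 1 else 0), sum_ite_eq']
    simp only [mem_range]
    split_ifs <;> simp <;> omega

lemma card_towerV : Fintype.card (towerV κ) = κ * (κ + 1) / 2 + 2 := by
  change Fintype.card ((Σ i : Fin κ, Fin (i + 1)) ⊕ Fin 2) = _
  rw [Fintype.card_sum, Fintype.card_sigma]
  simp only [Fintype.card_fin]
  rw [Fin.sum_univ_eq_sum_range (· + 1), show ∑ i ∈ range κ, (i + 1) = ∑ i ∈ range (κ + 1), i by
    simp [sum_range_succ'], sum_range_id, Nat.add_sub_cancel, mul_comm]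

lemma mem_neighborFinset {v w : towerV κ} :
    w ∈ (towerGraph κ).neighborFinset v ↔ lev v + 1 = lev w ∨ lev w + 1 = lev v :=
  SimpleGraph.mem_neighborFinset _ _ _

lemma levelSet_succ_subset_neighborFinset (v : towerV κ) :
    levelSet κ (lev v + 1) ⊆ (towerGraph κ).neighborFinset v :=
  fun _ hw => mem_neighborFinset.2 (Or.inl (mem_levelSet.1 hw).symm)

lemma levelSet_pred_subset_neighborFinset {v : towerV κ} (hv : lev v ≠ 0) :
    levelSet κ (lev v - 1) ⊆ (towerGraph κ).neighborFinset v :=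
  fun _ hw => mem_neighborFinset.2 (Or.inr (by rw [mem_levelSet.1 hw]; omega))

lemma degree_eq (v : towerV κ) :
    (towerGraph κ).degree v =
      (levelSet κ (lev v + 1)).card + if lev v = 0 then 0 else (levelSet κ (lev v - 1)).card := by
  have hN : (towerGraph κ).neighborFinset v =
      levelSet κ (lev v + 1) ∪ if lev v = 0 then ∅ else levelSet κ (lev v - 1) := by
    ext w
    split_ifs <;> simp only [mem_neighborFinset, mem_union, mem_levelSet, notMem_empty, or_false]
      <;> omega
  rw [← SimpleGraph.card_neighborFinset_eq_degree, hN, card_union_of_disjoint]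
  · split_ifs <;> rfl
  · split_ifs
    · exact disjoint_empty_right _
    · simp only [disjoint_left, mem_levelSet]
      omega

lemma strictMaj_eq (hκ : 2 ≤ κ) (v : towerV κ) :
    strictMaj (towerGraph κ) v =
      if lev v = 0 then 1 else if lev v = 1 then 3
      else if lev v = κ then (κ + 1) / 2 else lev v + 1 := by
  have := lev_le v
  rw [strictMaj, degree_eq, card_levelSet, card_levelSet, if_neg (Nat.succ_ne_zero _)]
  split_ifs <;> omega

noncomputable def levelsAtLeast (κ m : ℕ) : Finset (towerV κ) :=
  univ.filter fun v => m ≤ lev v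

lemma mem_levelsAtLeast {m : ℕ} {v : towerV κ} : v ∈ levelsAtLeast κ m ↔ m ≤ lev v := by
  simp [levelsAtLeast]

lemma mem_npStep_of_levelsAtLeast_subset {m : ℕ} {A : Finset (towerV κ)} {v : towerV κ}
    (hmκ : m < κ) (hA : levelsAtLeast κ m ⊆ A) (hv : 2 ≤ lev v) (hvm : m ≤ lev v + 1) :
    v ∈ npStep (towerGraph κ) (strictMaj (towerGraph κ)) A := by
  have hvκ := lev_le v
  have hτ := strictMaj_eq (hv.trans hvκ) v
  by_cases htop : lev v = κ
  · refine mem_npStep_of_subset (levelSet_pred_subset_neighborFinset (by omega))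
      (fun w hw => hA (mem_levelsAtLeast.2 ?_)) ?_
    · rw [mem_levelSet.1 hw]; omega
    · rw [hτ, card_levelSet]; split_ifs <;> omega
  · refine mem_npStep_of_subset (levelSet_succ_subset_neighborFinset v)
      (fun w hw => hA (mem_levelsAtLeast.2 ?_)) ?_
    · rw [mem_levelSet.1 hw]; omega
    · rw [hτ, card_levelSet, if_neg (Nat.succ_ne_zero _)]; split_ifs <;> omega

lemma levelsAtLeast_sub_one_subset_npStep (hκ : 3 ≤ κ) {L' A : Finset (towerV κ)}
    (hL'sub : L' ⊆ levelSet κ (κ - 1)) (hL'card : L'.card = (κ + 1) / 2)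
    (hκA : levelSet κ κ ⊆ A) (hL'A : L' ⊆ A) :
    levelsAtLeast κ (κ - 1) ⊆ npStep (towerGraph κ) (strictMaj (towerGraph κ)) A := by
  intro v hv
  have hvκ := lev_le v
  have hτ := strictMaj_eq (by omega) v
  rw [mem_levelsAtLeast] at hv
  by_cases htop : lev v = κ
  · refine mem_npStep_of_subset (fun w hw => ?_) hL'A ?_
    · exact levelSet_pred_subset_neighborFinset (by omega) (by rw [htop]; exact hL'sub hw)
    · rw [hτ, hL'card]; split_ifs <;> omega
  · have hsucc : lev v + 1 = κ := by omega
    refine mem_npStep_of_subset (levelSet_succ_subset_neighborFinset v) (by rwa [hsucc]) ?_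
    rw [hτ, hsucc, card_levelSet]; split_ifs <;> omega

lemma npStep_eq_univ (hκ : 3 ≤ κ) {x y : towerV κ} {A : Finset (towerV κ)}
    (hx : x ∈ levelSet κ 1) (hy : y ∈ levelSet κ 0)
    (hxA : x ∈ A) (hyA : y ∈ A) (hA : levelsAtLeast κ 2 ⊆ A) :
    npStep (towerGraph κ) (strictMaj (towerGraph κ)) A = univ := by
  rw [mem_levelSet] at hx hy
  refine eq_univ_of_forall fun v => ?_
  have hτ := strictMaj_eq (by omega) v
  rcases Nat.lt_or_ge (lev v) 2 with hv | hv
  · interval_cases hl : lev v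
    · refine mem_npStep_of_subset (B := {x}) ?_ (singleton_subset_iff.2 hxA) ?_
      · exact singleton_subset_iff.2 (mem_neighborFinset.2 (Or.inl (by omega)))
      · rw [hτ, card_singleton]; simp
    · have hy2 : y ∉ levelSet κ 2 := by rw [mem_levelSet]; omega
      refine mem_npStep_of_subset (B := insert y (levelSet κ 2)) ?_ ?_ ?_
      · exact insert_subset (mem_neighborFinset.2 (Or.inr (by omega)))
          (by simpa [hl] using levelSet_succ_subset_neighborFinset v)
      · exact insert_subset hyA fun w hw => hA (mem_levelsAtLeast.2 (mem_levelSet.1 hw).ge)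
      · rw [hτ, card_insert_of_notMem hy2, card_levelSet]; split_ifs <;> omega
  · exact mem_npStep_of_levelsAtLeast_subset (by omega) hA hv (by omega)

section Activation

variable {S : ℕ → Finset (towerV κ)} {L' : Finset (towerV κ)}

lemma levelsAtLeast_subset_Qseq (hκ : 3 ≤ κ) (hL'sub : L' ⊆ levelSet κ (κ - 1))
    (hL'card : L'.card = (κ + 1) / 2) (hS₀ : S 0 = levelSet κ κ ∪ L') {t : ℕ} (ht : 1 ≤ t)
    (htκ : t ≤ κ - 2) :
    levelsAtLeast κ (κ - t) ⊆ Qseq (towerGraph κ) (strictMaj (towerGraph κ)) S t := by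
  induction t, ht using Nat.le_induction with
  | base =>
    rw [Qseq_succ, hS₀]
    exact levelsAtLeast_sub_one_subset_npStep hκ hL'sub hL'card
      (subset_union_left.trans subset_union_left) (subset_union_right.trans subset_union_left)
  | succ t ht ih =>
    intro v hv
    rw [mem_levelsAtLeast] at hv
    exact mem_npStep_of_levelsAtLeast_subset (by omega) ((ih (by omega)).trans subset_union_right)
      (by omega) (by omega)

lemma Qseq_sub_one_eq_univ (hκ : 3 ≤ κ) (hL'sub : L' ⊆ levelSet κ (κ - 1))
    (hL'card : L'.card = (κ + 1) / 2) (hS₀ : S 0 = levelSet κ κ ∪ L') {x y : towerV κ}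
    (hx : x ∈ levelSet κ 1) (hy : y ∈ levelSet κ 0) (hS : S (κ - 2) = {x, y}) :
    Qseq (towerGraph κ) (strictMaj (towerGraph κ)) S (κ - 1) = univ := by
  have hQ := levelsAtLeast_subset_Qseq hκ hL'sub hL'card hS₀ (t := κ - 2) (by omega) le_rfl
  rw [show κ - (κ - 2) = 2 by omega] at hQ
  rw [show κ - 1 = κ - 2 + 1 by omega, Qseq_succ, hS]
  exact npStep_eq_univ hκ hx hy (by simp) (by simp) (hQ.trans subset_union_right)

end Activation

section TowerSeq

variable {L' : Finset (towerV κ)} {x y : towerV κ}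

lemma towerSeq_zero : towerSeq κ L' x y 0 = levelSet κ κ ∪ L' := if_pos rfl

lemma towerSeq_sub_two (hκ : 3 ≤ κ) : towerSeq κ L' x y (κ - 2) = {x, y} :=
  (if_neg (by omega)).trans (if_pos rfl)

lemma towerSeq_of_ne {i : ℕ} (h₀ : i ≠ 0) (h : i ≠ κ - 2) : towerSeq κ L' x y i = ∅ :=
  (if_neg h₀).trans (if_neg h)

lemma disjoint_towerSeq (hκ : 3 ≤ κ) (hL'sub : L' ⊆ levelSet κ (κ - 1))
    (hx : x ∈ levelSet κ 1) (hy : y ∈ levelSet κ 0) {i j : ℕ} (hij : i ≠ j) :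
    Disjoint (towerSeq κ L' x y i) (towerSeq κ L' x y j) := by
  have hseeds : Disjoint (levelSet κ κ ∪ L') {x, y} := by
    rw [mem_levelSet] at hx hy
    refine disjoint_left.2 fun v hv hvxy => ?_
    have hhigh : κ - 1 ≤ lev v := by
      rcases mem_union.1 hv with hv | hv
      · have := mem_levelSet.1 hv; omega
      · exact (mem_levelSet.1 (hL'sub hv)).ge
    rcases mem_insert.1 hvxy with rfl | hvy
    · omega
    · rw [mem_singleton.1 hvy] at hhigh; omega
  simp only [towerSeq]
  split_ifs <;> first | omega | exact hseeds | exact hseeds.symm | simp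

lemma ttsSize_towerSeq (hκ : 3 ≤ κ) (hL'sub : L' ⊆ levelSet κ (κ - 1))
    (hL'card : L'.card = (κ + 1) / 2) (hx : x ∈ levelSet κ 1) (hy : y ∈ levelSet κ 0) :
    ttsSize (towerSeq κ L' x y) (κ - 1) = κ + (κ + 1) / 2 + 2 := by
  have hxy : x ≠ y := by
    rintro rfl
    rw [mem_levelSet] at hx hy
    omega
  have htop : Disjoint (levelSet κ κ) L' := disjoint_left.2 fun v hv hv' => by
    have := mem_levelSet.1 (hL'sub hv')
    rw [mem_levelSet.1 hv] at this
    omega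
  rw [ttsSize, sum_eq_add_of_mem 0 (κ - 2) (by simp) (by simp; omega) (by omega)
      fun i _ hi => by rw [towerSeq_of_ne hi.1 hi.2, card_empty],
    towerSeq_zero, towerSeq_sub_two hκ, card_union_of_disjoint htop, card_pair hxy, hL'card,
    card_levelSet, if_neg (by omega), if_pos le_rfl]

lemma isDTTS_towerSeq (hκ : 3 ≤ κ) (hL'sub : L' ⊆ levelSet κ (κ - 1))
    (hL'card : L'.card = (κ + 1) / 2) (hx : x ∈ levelSet κ 1) (hy : y ∈ levelSet κ 0) :
    IsDTTS (towerGraph κ) (strictMaj (towerGraph κ)) (towerSeq κ L' x y) (κ - 1) :=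
  ⟨⟨towerSeq_of_ne (by omega) (by omega),
      Qseq_sub_one_eq_univ hκ hL'sub hL'card towerSeq_zero hx hy (towerSeq_sub_two hκ)⟩,
    fun _ _ _ _ hij => disjoint_towerSeq hκ hL'sub hx hy hij⟩

end TowerSeq

lemma MDTT_towerGraph_le (hκ : 3 ≤ κ) :
    MDTT (towerGraph κ) (strictMaj (towerGraph κ)) ≤ κ + (κ + 1) / 2 + 2 := by
  obtain ⟨L', hL'sub, hL'card⟩ := exists_subset_card_eq (s := levelSet κ (κ - 1)) (n := (κ + 1) / 2)
    (by rw [card_levelSet]; split_ifs <;> omega)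
  obtain ⟨x, hx⟩ : (levelSet κ 1).Nonempty :=
    card_pos.1 (by rw [card_levelSet]; split_ifs <;> omega)
  obtain ⟨y, hy⟩ : (levelSet κ 0).Nonempty := card_pos.1 (by rw [card_levelSet]; simp)
  exact Nat.sInf_le ⟨_, _, isDTTS_towerSeq hκ hL'sub hL'card hx hy,
    ttsSize_towerSeq hκ hL'sub hL'card hx hy⟩

lemma MDTT_towerGraph_le_three_mul_sqrt_card (hκ : 4 ≤ κ) :
    (MDTT (towerGraph κ) (strictMaj (towerGraph κ)) : ℝ) ≤
      3 * Real.sqrt (Fintype.card (towerV κ)) := by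
  have hM := MDTT_towerGraph_le (by omega : 3 ≤ κ)
  have hsq : MDTT (towerGraph κ) (strictMaj (towerGraph κ)) ^ 2 ≤ 9 * Fintype.card (towerV κ) := by
    rw [card_towerV]
    have hhalf : κ * (κ + 1) ≤ 2 * (κ * (κ + 1) / 2) + 1 := by omega
    calc MDTT (towerGraph κ) (strictMaj (towerGraph κ)) ^ 2 ≤ (2 * κ) ^ 2 :=
          Nat.pow_le_pow_left (by omega) 2
      _ ≤ 9 * (κ * (κ + 1) / 2 + 2) := by nlinarith
  refine le_of_pow_le_pow_left₀ two_ne_zero (by positivity) ?_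
  rw [mul_pow, Real.sq_sqrt (Nat.cast_nonneg _)]
  exact_mod_cast hsq

end Tower

/-- In the tower graph `G_κ` (`κ ≥ 4`) with strict majority thresholds, for
any `L' ⊆ L_{κ−1}` with `|L'| = ⌈κ/2⌉`, taking `S_0 = L_κ ∪ L'`, `S_{κ−2} = {x, y}` with
`x` the node of `L_1` and `y` one of its leaf neighbors, and `S_i = ∅` otherwise, yields a
disjoint timed target set (with `k = κ − 1`) of size `κ + ⌈κ/2⌉ + 2`; consequently the
minimum disjoint timed target set size of `G_κ` is `O(√n)`. -/
theorem stmt18 (κ : ℕ) (hκ : 4 ≤ κ)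
    (L' : Finset (towerV κ)) (hL'sub : L' ⊆ levelSet κ (κ - 1))
    (hL'card : L'.card = (κ + 1) / 2)
    (x y : towerV κ) (hx : x ∈ levelSet κ 1) (hy : y ∈ levelSet κ 0) :
    (IsDTTS (towerGraph κ) (strictMaj (towerGraph κ)) (towerSeq κ L' x y) (κ - 1)
      ∧ ttsSize (towerSeq κ L' x y) (κ - 1) = κ + (κ + 1) / 2 + 2)
    ∧ ∃ c : ℝ, ∀ κ' : ℕ, 4 ≤ κ' →
        (MDTT (towerGraph κ') (strictMaj (towerGraph κ')) : ℝ)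
          ≤ c * Real.sqrt (Fintype.card (towerV κ')) :=
  ⟨⟨Tower.isDTTS_towerSeq (by omega) hL'sub hL'card hx hy,
      Tower.ttsSize_towerSeq (by omega) hL'sub hL'card hx hy⟩,
    3, fun _ hκ' => Tower.MDTT_towerGraph_le_three_mul_sqrt_card hκ'⟩
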